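/- arXiv:0711.1643 — 4 statements merged into one kernel-verified Lean document; each statement's English description precedes it below -/
import Mathlib

section
/- Let Γ act on (X,ν) by a measure-preserving, essentially free, ergodic action and let π : X → {0,1}^E be a Γ-equivariant Borel map such that ν(U^∞) ≠ 0. Then the cluster equivalence relation R^cl restricted to its infinite locus U^∞ is ergodic (with respect to the normalized restriction of ν to U^∞) if and only if (ν, π) has indistinguishable infinite clusters. -/
open MeasureTheory

/-! Cayley graph setup: `Γ` is generated by the finite (multi)set indexed by `S`
via `gen : S → Γ`.  The Cayley graph has vertex set `Γ` and edge set `S × Γ`,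
the edge `(s, γ)` joining `γ` to `γ * gen s`.  An element `ω : S × Γ → Bool` is
identified with a spanning subgraph of the Cayley graph. -/

/-- The spanning subgraph of the Cayley graph determined by `ω : S × Γ → Bool`. -/
def ωGraph {Γ S : Type*} [Group Γ] (gen : S → Γ) (ω : S × Γ → Bool) :
    SimpleGraph Γ where
  Adj v w := v ≠ w ∧ ∃ e : S × Γ, ω e = true ∧
      ((v = e.2 ∧ w = e.2 * gen e.1) ∨ (w = e.2 ∧ v = e.2 * gen e.1))
  symm := ⟨by
    rintro v w ⟨hvw, e, he, h⟩
    exact ⟨hvw.symm, e, he, h.symm⟩⟩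
  loopless := ⟨by rintro v ⟨hv, -⟩; exact hv rfl⟩

/-- `C : Γ → Bool` is (the indicator function of) an infinite cluster
(connected component) of the subgraph `ω`. -/
def IsInfiniteCluster {Γ S : Type*} [Group Γ] (gen : S → Γ)
    (ω : S × Γ → Bool) (C : Γ → Bool) : Prop :=
  (∃ v : Γ, ∀ w : Γ, C w = true ↔ (ωGraph gen ω).Reachable v w) ∧
  {w : Γ | C w = true}.Infinite

/-- The cluster equivalence relation `R^cl` on `X`, for a `Γ`-action `a` on `X`
and a `Γ`-equivariant map `π : X → {0,1}^E` :  `x R^cl y` iff there is `γ ∈ Γ`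
with `γ⁻¹ · x = y` and the base vertex `o = 1` and `γ · o = γ` lie in the same
cluster of `π x`. -/
def ClusterRel {Γ S X : Type*} [Group Γ] (gen : S → Γ)
    (a : Γ → X → X) (π : X → S × Γ → Bool) (x y : X) : Prop :=
  ∃ γ : Γ, a γ⁻¹ x = y ∧ (ωGraph gen (π x)).Reachable 1 γ

/-- The infinite locus `U^∞`: points whose `R^cl`-class is infinite. -/
def InfiniteLocus {Γ S X : Type*} [Group Γ] (gen : S → Γ)
    (a : Γ → X → X) (π : X → S × Γ → Bool) : Set X :=
  {x : X | {y : X | ClusterRel gen a π x y}.Infinite}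

/-- `(ν, π)` has indistinguishable infinite clusters: for every Borel subset
`A` of `C^cl_∞ = {(x, C) : C an infinite cluster of π x}` invariant under the
diagonal `Γ`-action, the set of `x` admitting both `(x, C) ∈ A` and
`(x, C') ∈ C^cl_∞ \ A` is `ν`-null. -/
def HasIndistinguishableInfiniteClusters {Γ S X : Type*} [Group Γ]
    [MeasurableSpace X] (gen : S → Γ) (a : Γ → X → X) (ν : Measure X)
    (π : X → S × Γ → Bool) : Prop :=
  ∀ A : Set (X × (Γ → Bool)), MeasurableSet A →
    (∀ p ∈ A, IsInfiniteCluster gen (π p.1) p.2) →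
    (∀ (γ : Γ), ∀ p ∈ A, (a γ p.1, fun v : Γ => p.2 (γ⁻¹ * v)) ∈ A) →
    ν {x : X | (∃ C, (x, C) ∈ A) ∧
        (∃ C', IsInfiniteCluster gen (π x) C' ∧ (x, C') ∉ A)} = 0

/-!
An invariant Borel family `A` of infinite clusters is encoded by the set `B` of points of `U^∞`
whose cluster at the root `1` lies in `A`. Re-rooting a point along its cluster is the diagonal
action, so `B` is `R^cl`-invariant; and on the conull set of free points, every point that carries
a cluster of `A` (resp. an infinite cluster outside `A`) is a translate of a point of `B`
(resp. of `U^∞ \ B`). Hence ergodicity of `R^cl` makes one of these two sets of points null.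
Conversely, an `R^cl`-invariant `B ⊆ U^∞` is recovered from the family of infinite clusters having
a vertex `v` with `v⁻¹ • x ∈ B`; the points carrying a cluster outside this family form a
`Γ`-invariant set, which by ergodicity of the action is null or conull, and indistinguishability
turns this into the dichotomy for `B`.
-/

lemma Set.infinite_image_iff_forall_finset {α β : Type*} {f : α → β} {s : Set α} :
    (f '' s).Infinite ↔ ∀ t : Finset α, ∃ a ∈ s, ∀ b ∈ t, f a ≠ f b := by
  refine ⟨fun h t => ?_, fun h hfin => ?_⟩
  · obtain ⟨_, ⟨a, ha, rfl⟩, hnot⟩ := h.exists_notMem_finite (t.finite_toSet.image f)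
    exact ⟨a, ha, fun b hb hab => hnot ⟨b, hb, hab.symm⟩⟩
  · obtain ⟨t, -, ht, hts⟩ :=
      Set.exists_subset_image_finite_and.1 ⟨f '' s, subset_rfl, hfin, rfl⟩
    obtain ⟨a, ha, hne⟩ := h ht.toFinset
    obtain ⟨b, hb, hba⟩ := hts.symm ▸ Set.mem_image_of_mem f ha
    exact hne b (ht.mem_toFinset.2 hb) hba.symm

section Clusters

variable {Γ S : Type*} [Group Γ] (gen : S → Γ)

def ωGraphTranslateIso (ω : S × Γ → Bool) (γ : Γ) :
    ωGraph gen ω ≃g ωGraph gen (fun e => ω (e.1, γ⁻¹ * e.2)) where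
  toEquiv := Equiv.mulLeft γ
  map_rel_iff' {u w} := by
    simp only [ωGraph, Equiv.coe_mulLeft, ne_eq, mul_right_inj]
    refine and_congr_right fun _ => ?_
    refine ((Equiv.prodCongr (Equiv.refl S) (Equiv.mulLeft γ⁻¹)).exists_congr_left).trans ?_
    simp [mul_assoc]

open Classical in
noncomputable def clusterOf (ω : S × Γ → Bool) (v : Γ) : Γ → Bool :=
  fun w => decide ((ωGraph gen ω).Reachable v w)

variable {gen}

@[simp]
lemma clusterOf_eq_true {ω : S × Γ → Bool} {v w : Γ} :
    clusterOf gen ω v w = true ↔ (ωGraph gen ω).Reachable v w := by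
  simp [clusterOf]

lemma clusterOf_eq_of_reachable {ω : S × Γ → Bool} {u v : Γ} (h : (ωGraph gen ω).Reachable u v) :
    clusterOf gen ω u = clusterOf gen ω v :=
  funext fun _ => Bool.eq_iff_iff.2 <| by simpa using ⟨h.symm.trans, h.trans⟩

lemma isInfiniteCluster_clusterOf_iff {ω : S × Γ → Bool} {v : Γ} :
    IsInfiniteCluster gen ω (clusterOf gen ω v) ↔
      {w | (ωGraph gen ω).Reachable v w}.Infinite := by
  simp only [IsInfiniteCluster, clusterOf_eq_true]
  exact and_iff_right ⟨v, fun _ => Iff.rfl⟩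

lemma IsInfiniteCluster.exists_eq_clusterOf {ω : S × Γ → Bool} {C : Γ → Bool}
    (h : IsInfiniteCluster gen ω C) : ∃ v, C = clusterOf gen ω v := by
  obtain ⟨⟨v, hv⟩, -⟩ := h
  exact ⟨v, funext fun w => Bool.eq_iff_iff.2 (by simp [hv])⟩

lemma reachable_translate_iff {ω : S × Γ → Bool} {γ u w : Γ} :
    (ωGraph gen fun e => ω (e.1, γ⁻¹ * e.2)).Reachable (γ * u) (γ * w) ↔
      (ωGraph gen ω).Reachable u w :=
  (ωGraphTranslateIso gen ω γ).reachable_iff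

lemma clusterOf_translate (ω : S × Γ → Bool) (γ v : Γ) :
    clusterOf gen (fun e => ω (e.1, γ⁻¹ * e.2)) (γ * v) =
      fun w => clusterOf gen ω v (γ⁻¹ * w) := by
  funext w
  rw [Bool.eq_iff_iff, clusterOf_eq_true, clusterOf_eq_true,
    ← reachable_translate_iff (ω := ω) (γ := γ), mul_inv_cancel_left]

lemma IsInfiniteCluster.translate {ω : S × Γ → Bool} {C : Γ → Bool}
    (h : IsInfiniteCluster gen ω C) (γ : Γ) :
    IsInfiniteCluster gen (fun e => ω (e.1, γ⁻¹ * e.2)) (fun w => C (γ⁻¹ * w)) := by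
  obtain ⟨v, rfl⟩ := h.exists_eq_clusterOf
  rw [← clusterOf_translate, isInfiniteCluster_clusterOf_iff]
  rw [isInfiniteCluster_clusterOf_iff] at h
  refine (h.image (mul_right_injective γ).injOn).mono ?_
  rintro _ ⟨w, hw, rfl⟩
  exact reachable_translate_iff.2 hw

end Clusters

section Measurability

variable {Γ S : Type*} [Countable Γ] [Countable S]

lemma measurable_infinite_setOf :
    Measurable fun C : Γ → Bool => {w | C w = true}.Infinite := by
  have h (C : Γ → Bool) : {w | C w = true}.Infinite ↔
      ∀ t : Finset Γ, ∃ a, C a = true ∧ ∀ b ∈ t, a ≠ b := by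
    simpa using Set.infinite_image_iff_forall_finset (f := id) (s := {w | C w = true})
  simp_rw [h]
  fun_prop

variable [Group Γ] (gen : S → Γ)

lemma measurable_adj (u w : Γ) :
    Measurable fun ω : S × Γ → Bool => (ωGraph gen ω).Adj u w := by
  simp only [ωGraph]
  fun_prop

lemma measurable_isChain_adj (l : List Γ) :
    Measurable fun ω : S × Γ → Bool => l.IsChain (ωGraph gen ω).Adj := by
  induction l using List.twoStepInduction with
  | nil => simp
  | singleton => simp
  | cons_cons u w l _ ih => simpa using (measurable_adj gen u w).and (ih w)

lemma measurable_reachable (u w : Γ) :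
    Measurable fun ω : S × Γ → Bool => (ωGraph gen ω).Reachable u w := by
  have h (ω : S × Γ → Bool) : (ωGraph gen ω).Reachable u w ↔
      ∃ l : List Γ, (u :: l).IsChain (ωGraph gen ω).Adj ∧ (u :: l).getLast (by simp) = w := by
    rw [SimpleGraph.reachable_iff_reflTransGen]
    exact ⟨List.exists_isChain_cons_of_relationReflTransGen,
      fun ⟨l, hl, hw⟩ => List.relationReflTransGen_of_exists_isChain_cons l hl hw⟩
  simp_rw [h]
  have := measurable_isChain_adj gen
  fun_prop

variable {X : Type*} [MeasurableSpace X] {π : X → S × Γ → Bool}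

lemma measurable_clusterOf (hπ : Measurable π) (v : Γ) :
    Measurable fun x => clusterOf gen (π x) v := by
  refine measurable_pi_lambda _ fun w => measurable_to_bool ?_
  simpa [Set.preimage] using ((measurable_reachable gen v w).comp hπ).setOf

/-- The set `C^cl_∞`. -/
def infiniteClusters (π : X → S × Γ → Bool) : Set (X × (Γ → Bool)) :=
  {p | IsInfiniteCluster gen (π p.1) p.2}

lemma measurableSet_infiniteClusters (hπ : Measurable π) :
    MeasurableSet (infiniteClusters gen π) := by
  have hR (v w : Γ) : Measurable fun p : X × (Γ → Bool) => (ωGraph gen (π p.1)).Reachable v w :=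
    (measurable_reachable gen v w).comp (hπ.comp measurable_fst)
  have hI : Measurable fun p : X × (Γ → Bool) => {w | p.2 w = true}.Infinite :=
    measurable_infinite_setOf.comp measurable_snd
  exact measurableSet_setOfPred.2 (by unfold IsInfiniteCluster; fun_prop)

lemma measurableSet_image_fst_of_subset_infiniteClusters (hπ : Measurable π)
    {A : Set (X × (Γ → Bool))} (hA : MeasurableSet A) (hAC : A ⊆ infiniteClusters gen π) :
    MeasurableSet (Prod.fst '' A) := by
  have h : Prod.fst '' A = ⋃ v, {x | (x, clusterOf gen (π x) v) ∈ A} := by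
    ext x
    constructor
    · rintro ⟨⟨x, C⟩, hC, rfl⟩
      obtain ⟨v, hv⟩ := (hAC hC).exists_eq_clusterOf
      exact Set.mem_iUnion.2 ⟨v, show (x, clusterOf gen (π x) v) ∈ A from hv ▸ hC⟩
    · rintro ⟨_, ⟨v, rfl⟩, hv⟩
      exact ⟨_, hv, rfl⟩
  rw [h]
  exact .iUnion fun v => measurable_id.prodMk (measurable_clusterOf gen hπ v) hA

end Measurability

def ClusterRelErgodicOnInfiniteLocus {Γ S X : Type*} [Group Γ] [MeasurableSpace X]
    (gen : S → Γ) (a : Γ → X → X) (ν : Measure X) (π : X → S × Γ → Bool) : Prop :=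
  ∀ B : Set X, MeasurableSet B → B ⊆ InfiniteLocus gen a π →
    (∀ x ∈ B, ∀ y, ClusterRel gen a π x y → y ∈ B) →
    ν B = 0 ∨ ν (InfiniteLocus gen a π \ B) = 0

section Action

variable {Γ S X : Type*} [Group Γ] [MulAction Γ X] {gen : S → Γ} {π : X → S × Γ → Bool}

def IsDiagInvariant (A : Set (X × (Γ → Bool))) : Prop :=
  ∀ γ : Γ, ∀ p ∈ A, (γ • p.1, fun v => p.2 (γ⁻¹ * v)) ∈ A

/-- The infinite clusters `C` of `π x` such that re-rooting `x` at some vertex of `C` lands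
in `B`. -/
def infiniteClustersRootedIn (gen : S → Γ) (π : X → S × Γ → Bool) (B : Set X) :
    Set (X × (Γ → Bool)) :=
  {p ∈ infiniteClusters gen π | ∃ v, p.2 v = true ∧ v⁻¹ • p.1 ∈ B}

lemma IsDiagInvariant.mem_smul_iff {A : Set (X × (Γ → Bool))} (hA : IsDiagInvariant A) (γ : Γ)
    (x : X) (C : Γ → Bool) : (γ • x, fun v => C (γ⁻¹ * v)) ∈ A ↔ (x, C) ∈ A := by
  refine ⟨fun h => ?_, hA γ (x, C)⟩
  simpa using hA γ⁻¹ _ h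

lemma IsDiagInvariant.diff {A B : Set (X × (Γ → Bool))} (hA : IsDiagInvariant A)
    (hB : IsDiagInvariant B) : IsDiagInvariant (A \ B) := fun γ p hp =>
  ⟨hA γ p hp.1, fun h => hp.2 ((hB.mem_smul_iff γ p.1 p.2).1 h)⟩

lemma IsDiagInvariant.preimage_smul_image_fst {A : Set (X × (Γ → Bool))}
    (hA : IsDiagInvariant A) (γ : Γ) : (γ • ·) ⁻¹' (Prod.fst '' A) = Prod.fst '' A := by
  ext x
  constructor
  · rintro ⟨⟨y, C⟩, hC, rfl⟩
    exact ⟨_, hA γ⁻¹ _ hC, inv_smul_smul γ x⟩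
  · rintro ⟨⟨y, C⟩, hC, rfl⟩
    exact ⟨_, hA γ _ hC, rfl⟩

lemma hasIndistinguishableInfiniteClusters_iff [MeasurableSpace X] (ν : Measure X) :
    HasIndistinguishableInfiniteClusters gen (· • ·) ν π ↔
      ∀ A, MeasurableSet A → A ⊆ infiniteClusters gen π → IsDiagInvariant A →
        ν (Prod.fst '' A ∩ Prod.fst '' (infiniteClusters gen π \ A)) = 0 := by
  refine forall₄_congr fun A _ _ _ => ?_
  congr! 2
  ext x
  simp [infiniteClusters]

lemma setOf_clusterRel_eq_image (x : X) :
    {y | ClusterRel gen (· • ·) π x y} =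
      (fun γ => γ⁻¹ • x) '' {γ | (ωGraph gen (π x)).Reachable 1 γ} :=
  Set.ext fun _ => exists_congr fun _ => and_comm

lemma mem_infiniteClusters_of_mem_infiniteLocus {x : X}
    (hx : x ∈ InfiniteLocus gen (· • ·) π) : (x, clusterOf gen (π x) 1) ∈ infiniteClusters gen π :=
  isInfiniteCluster_clusterOf_iff.2 <|
    Set.Infinite.of_image _ (by rw [← setOf_clusterRel_eq_image]; exact hx)

lemma mem_infiniteLocus_of_stabilizer_eq_bot {x : X} (hx : MulAction.stabilizer Γ x = ⊥)
    (h : {γ | (ωGraph gen (π x)).Reachable 1 γ}.Infinite) :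
    x ∈ InfiniteLocus gen (· • ·) π := by
  show Set.Infinite _
  rw [setOf_clusterRel_eq_image]
  refine h.image fun γ _ δ _ hγδ => ?_
  have : δ * γ⁻¹ ∈ MulAction.stabilizer Γ x := by
    simp only [MulAction.mem_stabilizer_iff, mul_smul]
    rw [hγδ, smul_inv_smul]
  rw [hx, Subgroup.mem_bot, mul_inv_eq_one] at this
  exact this.symm

lemma subset_image_fst_infiniteClustersRootedIn {B : Set X}
    (hBU : B ⊆ InfiniteLocus gen (· • ·) π) :
    B ⊆ Prod.fst '' infiniteClustersRootedIn gen π B :=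
  fun x hx => ⟨_, ⟨mem_infiniteClusters_of_mem_infiniteLocus (hBU hx), 1, by simp,
    by simpa using hx⟩, rfl⟩

section Measurable

variable [Countable Γ] [Countable S] [MeasurableSpace X] [MeasurableConstSMul Γ X]

lemma measurableSet_infiniteLocus [MeasurableEq X] (hπ : Measurable π) :
    MeasurableSet (InfiniteLocus gen (· • ·) π) := by
  have h : InfiniteLocus gen (· • ·) π = {x | ∀ t : Finset Γ,
      ∃ γ, (ωGraph gen (π x)).Reachable 1 γ ∧ ∀ δ ∈ t, γ⁻¹ • x ≠ δ⁻¹ • x} := by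
    ext x
    show Set.Infinite _ ↔ _
    rw [setOf_clusterRel_eq_image, Set.infinite_image_iff_forall_finset]
    rfl
  have := fun γ => (measurable_reachable gen 1 γ).comp hπ
  exact h ▸ measurableSet_setOfPred.2 (by fun_prop)

lemma measurableSet_infiniteClustersRootedIn (hπ : Measurable π) {B : Set X}
    (hB : MeasurableSet B) : MeasurableSet (infiniteClustersRootedIn gen π B) := by
  refine (measurableSet_infiniteClusters gen hπ).inter (measurableSet_setOfPred.2 ?_)
  have := hB.mem
  fun_prop

end Measurable

variable (hπ : ∀ (γ : Γ) x, π (γ • x) = fun e => π x (e.1, γ⁻¹ * e.2))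
include hπ

lemma isDiagInvariant_infiniteClusters : IsDiagInvariant (infiniteClusters gen π) := by
  intro γ p hp
  have := hp.translate γ
  rwa [← hπ] at this

lemma reachable_smul_iff {γ u w : Γ} {x : X} :
    (ωGraph gen (π (γ • x))).Reachable (γ * u) (γ * w) ↔ (ωGraph gen (π x)).Reachable u w := by
  rw [hπ]
  exact reachable_translate_iff

lemma clusterOf_inv_smul_one (γ : Γ) (x : X) :
    clusterOf gen (π (γ⁻¹ • x)) 1 = fun w => clusterOf gen (π x) γ (γ * w) := by
  rw [hπ]
  simpa using clusterOf_translate (gen := gen) (π x) γ⁻¹ γ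

lemma clusterRel_equivalence : Equivalence (ClusterRel gen (· • ·) π) where
  refl x := ⟨1, by simp, .rfl⟩
  symm := by
    rintro x _ ⟨γ, rfl, hγ⟩
    refine ⟨γ⁻¹, by simp, ?_⟩
    rw [← reachable_smul_iff hπ (γ := γ)]
    simpa using hγ.symm
  trans := by
    rintro x _ _ ⟨γ, rfl, hγ⟩ ⟨δ, rfl, hδ⟩
    refine ⟨γ * δ, by simp [mul_smul], hγ.trans ?_⟩
    rw [← reachable_smul_iff hπ (γ := γ⁻¹)]
    simpa using hδ

lemma mem_infiniteLocus_of_clusterRel {x y : X} (h : ClusterRel gen (· • ·) π x y)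
    (hx : x ∈ InfiniteLocus gen (· • ·) π) : y ∈ InfiniteLocus gen (· • ·) π :=
  hx.mono fun _ hz => (clusterRel_equivalence hπ).trans ((clusterRel_equivalence hπ).symm h) hz

lemma exists_inv_smul_mem_of_mem_image_fst {A : Set (X × (Γ → Bool))} (hA : IsDiagInvariant A)
    (hAC : A ⊆ infiniteClusters gen π) {x : X} (hx : MulAction.stabilizer Γ x = ⊥)
    (hxA : x ∈ Prod.fst '' A) : ∃ v : Γ, v⁻¹ • x ∈ InfiniteLocus gen (· • ·) π ∧
      (v⁻¹ • x, clusterOf gen (π (v⁻¹ • x)) 1) ∈ A := by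
  obtain ⟨⟨x, C⟩, hC, rfl⟩ := hxA
  obtain ⟨v, rfl⟩ : ∃ v, C = clusterOf gen (π x) v := (hAC hC).exists_eq_clusterOf
  have hmem : (v⁻¹ • x, clusterOf gen (π (v⁻¹ • x)) 1) ∈ A := by
    rw [clusterOf_inv_smul_one hπ]
    simpa using hA v⁻¹ _ hC
  refine ⟨v, mem_infiniteLocus_of_stabilizer_eq_bot ?_ ?_, hmem⟩
  · rw [MulAction.stabilizer_smul_eq_stabilizer_map_conj, hx, Subgroup.map_bot]
  · exact isInfiniteCluster_clusterOf_iff.1 (hAC hmem)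

lemma IsDiagInvariant.measure_image_fst_eq_zero [Countable Γ] [MeasurableSpace X]
    {ν : Measure X} [SMulInvariantMeasure Γ X ν] (hfree : ∀ᵐ x ∂ν, MulAction.stabilizer Γ x = ⊥)
    {A : Set (X × (Γ → Bool))} (hA : IsDiagInvariant A) (hAC : A ⊆ infiniteClusters gen π)
    (h0 : ν (InfiniteLocus gen (· • ·) π ∩ {x | (x, clusterOf gen (π x) 1) ∈ A}) = 0) :
    ν (Prod.fst '' A) = 0 := by
  refine measure_mono_null_ae ?_ (measure_iUnion_null fun v : Γ =>
    (measure_preimage_smul ν v⁻¹ _).trans h0)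
  filter_upwards [hfree] with x hx hxA
  exact Set.mem_iUnion.2 (exists_inv_smul_mem_of_mem_image_fst hπ hA hAC hx hxA)

theorem hasIndistinguishableInfiniteClusters_of_clusterRelErgodicOnInfiniteLocus [Countable Γ]
    [Countable S] [MeasurableSpace X] [MeasurableEq X] [MeasurableConstSMul Γ X] {ν : Measure X}
    [SMulInvariantMeasure Γ X ν] (hπm : Measurable π)
    (hfree : ∀ᵐ x ∂ν, MulAction.stabilizer Γ x = ⊥)
    (herg : ClusterRelErgodicOnInfiniteLocus gen (· • ·) ν π) :
    HasIndistinguishableInfiniteClusters gen (· • ·) ν π := by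
  rw [hasIndistinguishableInfiniteClusters_iff]
  intro A hA hAC hAinv
  set B := InfiniteLocus gen (· • ·) π ∩ {x | (x, clusterOf gen (π x) 1) ∈ A}
  have hBm : MeasurableSet B := (measurableSet_infiniteLocus hπm).inter
    (measurable_id.prodMk (measurable_clusterOf gen hπm 1) hA)
  have hBsat : ∀ x ∈ B, ∀ y, ClusterRel gen (· • ·) π x y → y ∈ B := by
    rintro x ⟨hxU, hxA⟩ _ ⟨γ, rfl, hγ⟩
    refine ⟨mem_infiniteLocus_of_clusterRel hπ ⟨γ, rfl, hγ⟩ hxU, ?_⟩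
    show (_, _) ∈ A
    rw [clusterOf_inv_smul_one hπ, ← clusterOf_eq_of_reachable hγ]
    simpa using hAinv γ⁻¹ _ hxA
  rcases herg B hBm Set.inter_subset_left hBsat with h0 | h0
  · exact measure_mono_null Set.inter_subset_left (hAinv.measure_image_fst_eq_zero hπ hfree hAC h0)
  · refine measure_mono_null Set.inter_subset_right
      (((isDiagInvariant_infiniteClusters hπ).diff hAinv).measure_image_fst_eq_zero hπ hfree
        Set.sdiff_subset (measure_mono_null ?_ h0))
    rintro x ⟨hxU, -, hxA⟩
    exact ⟨hxU, fun h => hxA h.2⟩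

lemma isDiagInvariant_infiniteClustersRootedIn (B : Set X) :
    IsDiagInvariant (infiniteClustersRootedIn gen π B) := by
  rintro γ ⟨x, C⟩ ⟨hC, v, hv, hvB⟩
  exact ⟨isDiagInvariant_infiniteClusters hπ γ _ hC, γ * v, by simpa using hv,
    by simpa [mul_smul] using hvB⟩

lemma infiniteLocus_diff_subset_image_fst {B : Set X}
    (hB : ∀ x ∈ B, ∀ y, ClusterRel gen (· • ·) π x y → y ∈ B) :
    InfiniteLocus gen (· • ·) π \ B ⊆
      Prod.fst '' (infiniteClusters gen π \ infiniteClustersRootedIn gen π B) := by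
  rintro x ⟨hxU, hxB⟩
  refine ⟨_, ⟨mem_infiniteClusters_of_mem_infiniteLocus hxU, ?_⟩, rfl⟩
  rintro ⟨-, v, hv, hvB⟩
  exact hxB (hB _ hvB x ((clusterRel_equivalence hπ).symm ⟨v, rfl, by simpa using hv⟩))

theorem clusterRelErgodicOnInfiniteLocus_of_hasIndistinguishableInfiniteClusters [Countable Γ]
    [Countable S] [MeasurableSpace X] [MeasurableConstSMul Γ X] {ν : Measure X}
    (hπm : Measurable π)
    (herg : ∀ A : Set X, MeasurableSet A → (∀ γ : Γ, (γ • ·) ⁻¹' A = A) → ν A = 0 ∨ ν Aᶜ = 0)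
    (hind : HasIndistinguishableInfiniteClusters gen (· • ·) ν π) :
    ClusterRelErgodicOnInfiniteLocus gen (· • ·) ν π := by
  intro B hB hBU hBsat
  set A := infiniteClustersRootedIn gen π B
  have hA : MeasurableSet A := measurableSet_infiniteClustersRootedIn hπm hB
  have hAinv : IsDiagInvariant A := isDiagInvariant_infiniteClustersRootedIn hπ B
  have hEF := (hasIndistinguishableInfiniteClusters_iff ν).1 hind A hA (Set.sep_subset _ _) hAinv
  have hF := measurableSet_image_fst_of_subset_infiniteClusters gen hπm
    ((measurableSet_infiniteClusters gen hπm).diff hA) Set.sdiff_subset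
  rcases herg _ hF ((isDiagInvariant_infiniteClusters hπ).diff hAinv).preimage_smul_image_fst
    with hF0 | hFc0
  · exact Or.inr (measure_mono_null (infiniteLocus_diff_subset_image_fst hπ hBsat) hF0)
  · refine Or.inl (measure_mono_null (fun x hx => ?_) (measure_union_null hEF hFc0))
    by_cases hxF : x ∈ Prod.fst '' (infiniteClusters gen π \ A)
    · exact Or.inl ⟨subset_image_fst_infiniteClustersRootedIn hBU hx, hxF⟩
    · exact Or.inr hxF

end Action

theorem clusterRel_ergodic_iff_indistinguishable_general
    {Γ S X : Type*} [Group Γ] [Countable Γ] [Fintype S]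
    [MeasurableSpace X] [StandardBorelSpace X]
    (gen : S → Γ)
    (ν : Measure X)
    (a : Γ → X → X)
    (ha_one : ∀ x, a 1 x = x)
    (ha_mul : ∀ γ δ x, a (γ * δ) x = a γ (a δ x))
    (ha_mp : ∀ γ, MeasurePreserving (a γ) ν ν)
    (ha_free : ∀ᵐ x ∂ν, ∀ γ : Γ, a γ x = x → γ = 1)
    (ha_erg : ∀ A : Set X, MeasurableSet A → (∀ γ, a γ ⁻¹' A = A) →
      ν A = 0 ∨ ν Aᶜ = 0)
    (π : X → S × Γ → Bool) (hπ_meas : Measurable π)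
    (hπ_equiv : ∀ γ x, π (a γ x) = fun e => π x (e.1, γ⁻¹ * e.2)) :
    -- ergodicity of `R^cl` restricted to `U^∞` ...
    (∀ A : Set X, MeasurableSet A → A ⊆ InfiniteLocus gen a π →
        (∀ x ∈ A, ∀ y, ClusterRel gen a π x y → y ∈ A) →
        ν A = 0 ∨ ν (InfiniteLocus gen a π \ A) = 0)
    -- ... iff indistinguishability of infinite clusters
    ↔ HasIndistinguishableInfiniteClusters gen a ν π := by
  let _ : MulAction Γ X := { smul := a, one_smul := ha_one, mul_smul := ha_mul }
  have _ : MeasurableConstSMul Γ X := ⟨fun γ => (ha_mp γ).measurable⟩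
  have _ : SMulInvariantMeasure Γ X ν :=
    ⟨fun γ _ hs => (ha_mp γ).measure_preimage hs.nullMeasurableSet⟩
  have hfree : ∀ᵐ x ∂ν, MulAction.stabilizer Γ x = ⊥ :=
    ha_free.mono fun x hx => (Subgroup.eq_bot_iff_forall _).2 hx
  exact ⟨hasIndistinguishableInfiniteClusters_of_clusterRelErgodicOnInfiniteLocus hπ_equiv
      hπ_meas hfree,
    clusterRelErgodicOnInfiniteLocus_of_hasIndistinguishableInfiniteClusters hπ_equiv
      hπ_meas ha_erg⟩

/-- **Ergodicity of the cluster relation on its infinite locus is equivalent to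
indistinguishability of infinite clusters.**  Let `Γ` act on `(X, ν)` by a
measure-preserving, essentially free, ergodic action and let `π` be a
`Γ`-equivariant Borel map with `ν(U^∞) ≠ 0`.  Then `R^cl` restricted to `U^∞`
is ergodic iff `(ν, π)` has indistinguishable infinite clusters. -/
theorem clusterRel_ergodic_iff_indistinguishable
    {Γ S X : Type*} [Group Γ] [Countable Γ] [Fintype S]
    [MeasurableSpace X] [StandardBorelSpace X]
    (gen : S → Γ) (hgen : Subgroup.closure (Set.range gen) = ⊤)
    (ν : Measure X) [IsProbabilityMeasure ν]
    (a : Γ → X → X)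
    (ha_one : ∀ x, a 1 x = x)
    (ha_mul : ∀ γ δ x, a (γ * δ) x = a γ (a δ x))
    (ha_mp : ∀ γ, MeasurePreserving (a γ) ν ν)
    (ha_free : ∀ᵐ x ∂ν, ∀ γ : Γ, a γ x = x → γ = 1)
    (ha_erg : ∀ A : Set X, MeasurableSet A → (∀ γ, a γ ⁻¹' A = A) →
      ν A = 0 ∨ ν Aᶜ = 0)
    (π : X → S × Γ → Bool) (hπ_meas : Measurable π)
    (hπ_equiv : ∀ γ x, π (a γ x) = fun e => π x (e.1, γ⁻¹ * e.2))
    (hU : ν (InfiniteLocus gen a π) ≠ 0) :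
    -- ergodicity of `R^cl` restricted to `U^∞` ...
    (∀ A : Set X, MeasurableSet A → A ⊆ InfiniteLocus gen a π →
        (∀ x ∈ A, ∀ y, ClusterRel gen a π x y → y ∈ A) →
        ν A = 0 ∨ ν (InfiniteLocus gen a π \ A) = 0)
    -- ... iff indistinguishability of infinite clusters
    ↔ HasIndistinguishableInfiniteClusters gen a ν π :=
  clusterRel_ergodic_iff_indistinguishable_general gen ν a ha_one ha_mul ha_mp ha_free ha_erg π
    hπ_meas hπ_equiv
end

section
/- Let G be a simple graph that is connected and has no cutvertex, in which every vertex has finite degree and such that for each pair of vertices (a, b) there are only finitely many distinct simple paths joining a to b. Then G is finite. -/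
/-!
Fix distinct vertices `a` and `b`. Only finitely many vertices lie on `a`–`b` paths, so it
suffices that every vertex does, and by connectivity it is enough that this set is closed under
adjacency. Let `u` lie on an `a`–`b` path `P` and let `v` be a neighbour of `u`. As `u` is not a
cutvertex, `v` reaches another vertex of `P` avoiding `u`; stopping at the first vertex `w` of `P`
met and splicing `P` up to `u`, the edge `uv`, this walk and `P` from `w` on (after reversing `P`
if `w` precedes `u`) gives an `a`–`b` path through `v`.
-/

/-- A vertex `a` of a graph is a cutvertex if there are two vertices `b, c`,
both distinct from `a` and in the same connected component as `a`, such that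
every (simple) path joining `b` to `c` passes through `a`. -/
def IsCutvertex {V : Type*} (G : SimpleGraph V) (a : V) : Prop :=
  ∃ b c : V, b ≠ a ∧ c ≠ a ∧ G.Reachable a b ∧ G.Reachable a c ∧
    ∀ p : G.Walk b c, p.IsPath → a ∈ p.support

namespace SimpleGraph

variable {V : Type*} {G : SimpleGraph V}

theorem exists_isPath_notMem_support_of_not_isCutvertex (hG : G.Preconnected) {a b c : V}
    (ha : ¬ IsCutvertex G a) (hb : b ≠ a) (hc : c ≠ a) :
    ∃ p : G.Walk b c, p.IsPath ∧ a ∉ p.support := by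
  by_contra! h
  exact ha ⟨b, c, hb, hc, hG a b, hG a c, h⟩

theorem Preconnected.eq_univ_of_adj_closed (hG : G.Preconnected) {S : Set V} {x : V}
    (hx : x ∈ S) (hS : ∀ ⦃u v⦄, G.Adj u v → u ∈ S → v ∈ S) : S = Set.univ := by
  refine Set.eq_univ_of_forall fun y => by_contra fun hy => ?_
  obtain ⟨d, -, hd, hd'⟩ := (hG x y).some.exists_boundary_dart S hx hy
  exact hd' (hS d.adj hd)

namespace Walk

theorem exists_isPath_to_first_mem {S : Set V} {x y : V} (p : G.Walk x y) (hy : y ∈ S) :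
    ∃ w ∈ S, ∃ q : G.Walk x w, q.IsPath ∧ q.support ⊆ p.support ∧
      ∀ z ∈ q.support, z ∈ S → z = w := by
  classical
  suffices ∃ w ∈ S, ∃ q : G.Walk x w, q.support ⊆ p.support ∧ ∀ z ∈ q.support, z ∈ S → z = w by
    obtain ⟨w, hw, q, hqp, hq⟩ := this
    exact ⟨w, hw, q.bypass, q.bypass_isPath, List.Subset.trans q.support_bypass_subset_support hqp,
      fun z hz => hq z (q.support_bypass_subset_support hz)⟩
  induction p with
  | nil => exact ⟨_, hy, nil, by simp, by simp⟩
  | @cons x m y h p ih =>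
    by_cases hx : x ∈ S
    · exact ⟨x, hx, nil, by simp, by simp⟩
    · obtain ⟨w, hw, q, hqp, hq⟩ := ih hy
      refine ⟨w, hw, cons h q, List.cons_subset_cons _ hqp, ?_⟩
      simp only [support_cons, List.mem_cons]
      rintro z (rfl | hz) hzS
      · exact absurd hzS hx
      · exact hq z hz hzS

theorem isPath_takeUntil_append_cons_append [DecidableEq V] {a b u v w : V} {A : G.Walk a w}
    {B : G.Walk w b} (hP : (A.append B).IsPath) (hu : u ∈ A.support) (huw : u ≠ w)
    (huv : G.Adj u v) {R : G.Walk v w} (hR : R.IsPath)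
    (hRP : ∀ z ∈ R.support, z ∈ A.support ∨ z ∈ B.support → z = w) :
    ((A.takeUntil u hu).append (cons huv (R.append B))).IsPath := by
  have hA := hP.of_append_left
  have hwT : w ∉ (A.takeUntil u hu).support := endpoint_notMem_support_takeUntil hA hu huw.symm
  have hTA := A.support_takeUntil_subset_support hu
  have hwB : w ∉ B.support.tail := by
    have := hP.of_append_right.support_nodup
    rw [← cons_tail_support, List.nodup_cons] at this
    exact this.1
  rw [isPath_def, support_append, List.nodup_append] at hP
  simp only [isPath_def, support_append, support_cons, List.tail_cons, List.nodup_append]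
  refine ⟨(hA.takeUntil hu).support_nodup, ⟨hR.support_nodup, hP.2.1, ?_⟩, ?_⟩
  · rintro z hzR _ hzB rfl
    exact hwB (hRP z hzR (.inr (List.mem_of_mem_tail hzB)) ▸ hzB)
  · rintro z hzT _ hz rfl
    rcases List.mem_append.mp hz with hzR | hzB
    · exact hwT (hRP z hzR (.inl (hTA hzT)) ▸ hzT)
    · exact hP.2.2 z (hTA hzT) z hzB rfl

theorem IsPath.exists_isPath_mem_support_of_adj {a b u v w : V} {P : G.Walk a b}
    (hP : P.IsPath) (hu : u ∈ P.support) (hw : w ∈ P.support) (huw : u ≠ w) (huv : G.Adj u v)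
    {R : G.Walk v w} (hR : R.IsPath) (hRP : ∀ z ∈ R.support, z ∈ P.support → z = w) :
    ∃ Q : G.Walk a b, Q.IsPath ∧ v ∈ Q.support := by
  classical
  have hRP' : ∀ z ∈ R.support,
      z ∈ (P.takeUntil w hw).support ∨ z ∈ (P.dropUntil w hw).support → z = w :=
    fun z hz hzP => hRP z hz <| hzP.elim (P.support_takeUntil_subset_support hw ·)
      (P.support_dropUntil_subset_support hw ·)
  rw [← P.take_spec hw] at hP hu
  rcases (mem_support_append_iff _ _).mp hu with huT | huD
  · exact ⟨_, isPath_takeUntil_append_cons_append hP huT huw huv hR hRP', by simp⟩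
  · rw [← isPath_reverse_iff, reverse_append] at hP
    refine ⟨_, (isPath_takeUntil_append_cons_append hP (by simpa using huD) huw huv hR
      fun z hz hzP => hRP' z hz (by simpa [or_comm] using hzP)).reverse, by simp⟩

end Walk

def verticesOnPaths (G : SimpleGraph V) (a b : V) : Set V :=
  {v | ∃ p : G.Walk a b, p.IsPath ∧ v ∈ p.support}

theorem finite_verticesOnPaths {a b : V} (h : {p : G.Walk a b | p.IsPath}.Finite) :
    (G.verticesOnPaths a b).Finite := by
  refine (h.biUnion fun p _ => p.support.finite_toSet).subset ?_
  rintro v ⟨p, hp, hv⟩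
  exact Set.mem_biUnion hp hv

theorem mem_verticesOnPaths_of_adj (hG : G.Preconnected) {a b u v : V} (hab : a ≠ b)
    (hu : u ∈ G.verticesOnPaths a b) (hcut : ¬ IsCutvertex G u) (huv : G.Adj u v) :
    v ∈ G.verticesOnPaths a b := by
  obtain ⟨P, hP, huP⟩ := hu
  obtain ⟨t, htP, htu⟩ : ∃ t ∈ P.support, t ≠ u := by
    by_cases hua : u = a
    · exact ⟨b, P.end_mem_support, hua ▸ hab.symm⟩
    · exact ⟨a, P.start_mem_support, Ne.symm hua⟩
  obtain ⟨R, -, huR⟩ := exists_isPath_notMem_support_of_not_isCutvertex hG hcut huv.ne' htu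
  obtain ⟨w, hwP, R', hR', hR'R, hR'P⟩ :=
    R.exists_isPath_to_first_mem (S := {z | z ∈ P.support}) htP
  have huw : u ≠ w := fun h => huR (hR'R (h ▸ R'.end_mem_support))
  exact hP.exists_isPath_mem_support_of_adj huP hwP huw huv hR' hR'P

theorem verticesOnPaths_eq_univ (hG : G.Connected) (hcut : ∀ x, ¬ IsCutvertex G x) {a b : V}
    (hab : a ≠ b) : G.verticesOnPaths a b = Set.univ := by
  obtain ⟨P, hP⟩ := hG.exists_isPath a b
  exact hG.preconnected.eq_univ_of_adj_closed ⟨P, hP, P.start_mem_support⟩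
    fun u _ huv hu => mem_verticesOnPaths_of_adj hG.preconnected hab hu (hcut u) huv

end SimpleGraph

open SimpleGraph

theorem finite_of_no_cutvertex_finitely_many_paths_general
    {V : Type*} (G : SimpleGraph V)
    (hconn : G.Connected)
    (hcut : ∀ a : V, ¬ IsCutvertex G a)
    (hpaths : ∀ a b : V, {p : G.Walk a b | p.IsPath}.Finite) :
    Finite V := by
  rcases subsingleton_or_nontrivial V with _ | _
  · exact Finite.of_subsingleton
  obtain ⟨a, b, hab⟩ := exists_pair_ne V
  rw [← Set.finite_univ_iff, ← verticesOnPaths_eq_univ hconn hcut hab]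
  exact finite_verticesOnPaths (hpaths a b)

/-- **Blocks with finitely many paths between any two vertices are finite.**
A connected simple graph without cutvertices, in which every vertex has finite
degree and any two vertices are joined by only finitely many distinct simple
paths, is finite. -/
theorem finite_of_no_cutvertex_finitely_many_paths
    {V : Type*} (G : SimpleGraph V)
    (hconn : G.Connected)
    (hcut : ∀ a : V, ¬ IsCutvertex G a)
    (hdeg : ∀ v : V, (G.neighborSet v).Finite)
    (hpaths : ∀ a b : V, {p : G.Walk a b | p.IsPath}.Finite) :
    Finite V :=
  finite_of_no_cutvertex_finitely_many_paths_general G hconn hcut hpaths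
end

section
/- Let G be a simple graph that is connected and has no cutvertex, and suppose G contains a one-way infinite simple path with vertices a₁, a₂, a₃, … . Then there are infinitely many distinct simple paths in G joining a₁ to a₂. -/
namespace SimpleGraph.Walk

variable {V : Type*} {G : SimpleGraph V}

theorem isPath_append_iff {u v w : V} {p : G.Walk u v} {q : G.Walk v w} :
    (p.append q).IsPath ↔ p.IsPath ∧ q.IsPath ∧ ∀ x ∈ p.support, x ∈ q.support → x = v := by
  rw [isPath_def, isPath_def, isPath_def, support_append, ← q.cons_tail_support, List.nodup_cons,
    List.nodup_append]
  refine ⟨fun ⟨hp, hq, hpq⟩ ↦ ⟨hp, ⟨fun hv ↦ hpq _ p.end_mem_support _ hv rfl, hq⟩, ?_⟩,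
    fun ⟨hp, ⟨hv, hq⟩, hpq⟩ ↦ ⟨hp, hq, ?_⟩⟩
  · intro x hx hxq
    rcases List.mem_cons.mp hxq with rfl | hxq
    · rfl
    · exact absurd rfl (hpq x hx x hxq)
  · rintro x hx _ hxq rfl
    exact hv (hpq x hx (List.mem_cons_of_mem _ hxq) ▸ hxq)

theorem exists_eq_append_of_end_mem (S : Set V) {u w : V} (q : G.Walk u w) (hw : w ∈ S) :
    ∃ x ∈ S, ∃ (q₁ : G.Walk u x) (q₂ : G.Walk x w),
      q = q₁.append q₂ ∧ ∀ y ∈ q₁.support, y ∈ S → y = x := by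
  induction q with
  | nil => exact ⟨_, hw, nil, nil, rfl, by simp⟩
  | @cons u v w h q ih =>
    by_cases hu : u ∈ S
    · exact ⟨u, hu, nil, cons h q, rfl, by simp⟩
    obtain ⟨x, hx, q₁, q₂, rfl, hfirst⟩ := ih hw
    refine ⟨x, hx, cons h q₁, q₂, rfl, ?_⟩
    intro y hy hyS
    rcases List.mem_cons.mp hy with rfl | hy
    · exact absurd hyS hu
    · exact hfirst y hy hyS

theorem IsPath.exists_isPath_support_subset_of_append {s u x t : V} {A : G.Walk s u}
    {B : G.Walk u t} (hP : (A.append B).IsPath) (hx : x ∈ B.support) {E : G.Walk u x}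
    (hE : E.IsPath) (hEP : ∀ y ∈ E.support, y ∈ (A.append B).support → y = u ∨ y = x) :
    ∃ P' : G.Walk s t, P'.IsPath ∧ E.support ⊆ P'.support := by
  obtain ⟨C, D, rfl⟩ := B.mem_support_iff_exists_append.mp hx
  obtain ⟨hA, hCD, hACD⟩ := isPath_append_iff.mp hP
  obtain ⟨-, hD, hCD⟩ := isPath_append_iff.mp hCD
  refine ⟨A.append (E.append D), isPath_append_iff.mpr ⟨hA, isPath_append_iff.mpr ⟨hE, hD, ?_⟩, ?_⟩,
    fun y hy ↦ by simp [hy]⟩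
  · intro y hyE hyD
    rcases hEP y hyE (by simp [hyD]) with rfl | rfl
    · exact hCD y C.start_mem_support hyD
    · rfl
  · intro y hyA hyED
    rcases (mem_support_append_iff _ _).mp hyED with hyE | hyD
    · rcases hEP y hyE (by simp [hyA]) with rfl | rfl
      · rfl
      · exact hACD y hyA (by simp)
    · exact hACD y hyA (by simp [hyD])

theorem IsPath.exists_isPath_support_subset_of_ear {s t u x : V} {P : G.Walk s t}
    (hP : P.IsPath) (hu : u ∈ P.support) (hx : x ∈ P.support) {E : G.Walk u x} (hE : E.IsPath)
    (hEP : ∀ y ∈ E.support, y ∈ P.support → y = u ∨ y = x) :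
    ∃ P' : G.Walk s t, P'.IsPath ∧ E.support ⊆ P'.support := by
  obtain ⟨A, B, rfl⟩ := P.mem_support_iff_exists_append.mp hu
  rcases (mem_support_append_iff _ _).mp hx with hxA | hxB
  · have hP' : (B.reverse.append A.reverse).IsPath := by rwa [← reverse_append, isPath_reverse_iff]
    obtain ⟨P', hP', hEP'⟩ := hP'.exists_isPath_support_subset_of_append (by simpa using hxA) hE
      (by simpa [or_comm] using hEP)
    exact ⟨P'.reverse, hP'.reverse, by simpa using hEP'⟩
  · exact hP.exists_isPath_support_subset_of_append hxB hE hEP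

theorem IsPath.exists_isPath_mem_support_of_adj_s7 {s t u v w : V} {P : G.Walk s t}
    (hP : P.IsPath) (hu : u ∈ P.support) (huv : G.Adj u v) (q : G.Walk v w)
    (hw : w ∈ P.support) (hq : u ∉ q.support) :
    ∃ P' : G.Walk s t, P'.IsPath ∧ v ∈ P'.support := by
  classical
  obtain ⟨x, hxP, q₁, q₂, rfl, hfirst⟩ := exists_eq_append_of_end_mem {y | y ∈ P.support} q hw
  have hq₁ : u ∉ q₁.bypass.support := fun h ↦ hq (by simp [support_bypass_subset_support _ h])
  obtain ⟨P', hP', hEP'⟩ := hP.exists_isPath_support_subset_of_ear hu hxP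
    (E := cons huv q₁.bypass) (q₁.bypass_isPath.cons hq₁) (by
      intro y hy hyP
      rcases List.mem_cons.mp hy with rfl | hy
      · exact .inl rfl
      · exact .inr (hfirst y (support_bypass_subset_support _ hy) hyP))
  exact ⟨P', hP', hEP' (by simp)⟩

theorem IsPath.exists_isPath_mem_support_of_not_isCutvertex {s t u v : V} {P : G.Walk s t}
    (hP : P.IsPath) (hu : u ∈ P.support) (hs : s ≠ u) (hcut : ¬IsCutvertex G u) (huv : G.Adj u v) :
    ∃ P' : G.Walk s t, P'.IsPath ∧ v ∈ P'.support := by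
  classical
  simp only [IsCutvertex, not_exists, not_and, not_forall] at hcut
  obtain ⟨q, -, hq⟩ := hcut v s huv.ne.symm hs huv.reachable (P.takeUntil u hu).reachable.symm
  exact hP.exists_isPath_mem_support_of_adj_s7 hu huv q P.start_mem_support hq

end SimpleGraph.Walk

theorem infinitely_many_paths_of_no_cutvertex_general
    {V : Type*} (G : SimpleGraph V)
    (hcut : ∀ v : V, ¬ IsCutvertex G v)
    (a : ℕ → V) (hinj : Function.Injective a)
    (hadj : ∀ i : ℕ, G.Adj (a i) (a (i + 1))) :
    {p : G.Walk (a 0) (a 1) | p.IsPath}.Infinite := by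
  intro hfin
  set I : Set ℕ := {m | ∃ p : G.Walk (a 0) (a 1), p.IsPath ∧ a m ∈ p.support}
  have hI : I.Finite :=
    (hfin.biUnion fun p _ ↦ p.support.finite_toSet.preimage hinj.injOn).subset
      fun _ ⟨_, hp, hm⟩ ↦ Set.mem_biUnion hp hm
  have h1 : 1 ∈ I := ⟨(hadj 0).toWalk, (hadj 0).isPath_toWalk, by simp⟩
  obtain ⟨m, ⟨P, hP, hmP⟩, hmax⟩ := Set.exists_max_image I id hI ⟨1, h1⟩
  have hm1 : 1 ≤ m := hmax 1 h1
  obtain ⟨P', hP', hmP'⟩ :=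
    hP.exists_isPath_mem_support_of_not_isCutvertex hmP (hinj.ne (by omega)) (hcut _) (hadj m)
  exact m.not_succ_le_self (hmax (m + 1) ⟨P', hP', hmP'⟩)

/-- If a connected simple graph without cutvertices contains a one-way
infinite simple path `a 0, a 1, a 2, …`, then there are infinitely many
distinct simple paths joining `a 0` to `a 1`. -/
theorem infinitely_many_paths_of_no_cutvertex
    {V : Type*} (G : SimpleGraph V)
    (hconn : G.Connected)
    (hcut : ∀ v : V, ¬ IsCutvertex G v)
    (a : ℕ → V) (hinj : Function.Injective a)
    (hadj : ∀ i : ℕ, G.Adj (a i) (a (i + 1))) :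
    {p : G.Walk (a 0) (a 1) | p.IsPath}.Infinite :=
  infinitely_many_paths_of_no_cutvertex_general G hcut a hinj hadj
end

section
/- Let α, β, n be natural numbers with 0 < α < β, let p := α/β, and let k := βⁿ. Then there exists a function f : Fin k → (Fin n → Bool) such that the push-forward under f of the uniform probability measure on Fin k equals the product over Fin n of the Bernoulli(p) measure on Bool (assigning probability p to true and 1−p to false). -/
/-!
Writing `k < β ^ n` in base `β` identifies `Fin (β ^ n)` with `Fin n → Fin β`, and under this
identification the uniform measure is the product of the uniform measures on the digits. The
threshold `j ↦ j < α` pushes the uniform measure on `Fin β` to Bernoulli(`α / β`), and a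
coordinatewise pushforward of a product measure is the product of the pushforwards.
-/

open MeasureTheory Measure ENNReal

section Uniform

variable {X : Type*} [Fintype X] [MeasurableSpace X]

theorem isProbabilityMeasure_inv_card_smul_count [Nonempty X] :
    IsProbabilityMeasure ((Fintype.card X : ℝ≥0∞)⁻¹ • (count : Measure X)) :=
  ⟨by simpa [count_univ] using ENNReal.inv_mul_cancel (by simp) (natCast_ne_top _)⟩

variable [MeasurableSingletonClass X]

theorem map_equiv_inv_card_smul_count {Y : Type*} [Fintype Y] [MeasurableSpace Y]
    [MeasurableSingletonClass Y] (e : X ≃ Y) :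
    map e ((Fintype.card X : ℝ≥0∞)⁻¹ • (count : Measure X)) =
      (Fintype.card Y : ℝ≥0∞)⁻¹ • (count : Measure Y) := by
  refine ext_of_singleton fun y => ?_
  rw [map_apply (measurable_of_finite e) (measurableSet_singleton y),
    ← e.image_symm_eq_preimage]
  simp [Fintype.card_congr e]

end Uniform

theorem pi_inv_card_smul_count {ι : Type*} {X : ι → Type*} [Fintype ι] [DecidableEq ι]
    [∀ i, Fintype (X i)] [∀ i, Nonempty (X i)] [∀ i, MeasurableSpace (X i)]
    [∀ i, MeasurableSingletonClass (X i)] :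
    Measure.pi (fun i => (Fintype.card (X i) : ℝ≥0∞)⁻¹ • (count : Measure (X i))) =
      (Fintype.card (∀ i, X i) : ℝ≥0∞)⁻¹ • count := by
  have := fun i => isProbabilityMeasure_inv_card_smul_count (X := X i)
  refine ext_of_singleton fun x => ?_
  simpa [Fintype.card_pi] using
    (ENNReal.prod_inv_distrib fun _ _ _ _ _ => .inr (natCast_ne_top _)).symm

instance isProbabilityMeasure_inv_smul_count_fin {β : ℕ} [NeZero β] :
    IsProbabilityMeasure ((β : ℝ≥0∞)⁻¹ • (count : Measure (Fin β))) := by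
  simpa using isProbabilityMeasure_inv_card_smul_count (X := Fin β)

theorem map_decide_lt_inv_smul_count {α β : ℕ} [NeZero β] (hαβ : α ≤ β) :
    map (fun j : Fin β => decide ((j : ℕ) < α)) ((β : ℝ≥0∞)⁻¹ • count) =
      (α / β : ℝ≥0∞) • dirac true + (1 - α / β : ℝ≥0∞) • dirac false := by
  set μ := map (fun j : Fin β => decide ((j : ℕ) < α)) ((β : ℝ≥0∞)⁻¹ • count)
  have : IsProbabilityMeasure μ := isProbabilityMeasure_map (measurable_of_finite _).aemeasurable
  have hlt : (fun j : Fin β => decide ((j : ℕ) < α)) ⁻¹' {true} =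
      ↑({j | (j : ℕ) < α} : Finset (Fin β)) := by
    ext; simp
  have htrue : μ {true} = α / β := by
    rw [map_apply (measurable_of_finite _) (measurableSet_singleton _), hlt,
      Measure.smul_apply, count_apply_finset, Fin.card_filter_val_lt, min_eq_right hαβ,
      smul_eq_mul, ENNReal.div_eq_inv_mul]
  refine ext_of_singleton fun b => ?_
  cases b
  · rw [show ({false} : Set Bool) = {true}ᶜ from (Bool.compl_singleton true).symm,
      prob_compl_eq_one_sub (measurableSet_singleton _), htrue]
    simp
  · simp [htrue]

theorem exists_map_uniform_to_bernoulli_product_general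
    (α β n : ℕ) (hαβ : α < β) :
    ∃ f : Fin (β ^ n) → (Fin n → Bool),
      Measure.map f ((((β ^ n : ℕ) : ENNReal))⁻¹ • Measure.count) =
        Measure.pi (fun _ : Fin n =>
          ((α : ENNReal) / (β : ENNReal)) • Measure.dirac true +
            (1 - (α : ENNReal) / (β : ENNReal)) • Measure.dirac false) := by
  have : NeZero β := ⟨((Nat.zero_le α).trans_lt hαβ).ne'⟩
  have huniform : map finFunctionFinEquiv.symm (((β ^ n : ℕ) : ℝ≥0∞)⁻¹ • count) =
      Measure.pi (fun _ : Fin n => (β : ℝ≥0∞)⁻¹ • (count : Measure (Fin β))) := by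
    simpa using (map_equiv_inv_card_smul_count (finFunctionFinEquiv (m := β) (n := n)).symm).trans
      (pi_inv_card_smul_count (X := fun _ : Fin n => Fin β)).symm
  refine ⟨(fun x i => decide ((x i : ℕ) < α)) ∘ finFunctionFinEquiv.symm, ?_⟩
  rw [← map_map (measurable_of_finite _) (measurable_of_finite _), huniform,
    pi_map_pi (f := fun _ (j : Fin β) => decide ((j : ℕ) < α))
      fun _ => (measurable_of_finite _).aemeasurable,
    map_decide_lt_inv_smul_count hαβ.le]

/-- Let `0 < α < β`, `p := α/β` and `k := βⁿ`.  Then there is a function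
`f : Fin k → (Fin n → Bool)` pushing the uniform probability measure on
`Fin k` forward to the product over `Fin n` of the Bernoulli(`p`) measure on
`Bool`. -/
theorem exists_map_uniform_to_bernoulli_product
    (α β n : ℕ) (hα : 0 < α) (hαβ : α < β) :
    ∃ f : Fin (β ^ n) → (Fin n → Bool),
      Measure.map f ((((β ^ n : ℕ) : ENNReal))⁻¹ • Measure.count) =
        Measure.pi (fun _ : Fin n =>
          ((α : ENNReal) / (β : ENNReal)) • Measure.dirac true +
            (1 - (α : ENNReal) / (β : ENNReal)) • Measure.dirac false) :=
  exists_map_uniform_to_bernoulli_product_general α β n hαβ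
end
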